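/- For any t ≥ 0, h ∈ (0,q], and uniformly continuous r : [0,∞) → [0,q], the deviated argument satisfies t - γ_h(t,r) ≤ 3q + w_r(q). -/

import Mathlib

/-!
With `s = ⌊t/h⌋ h`, the lag splits as `t - γ_h(t,r) = (t - s) + ⌊r(s)/h⌋ h`. The first term is
below `h` and the second is at most `r(s) ≤ q`, so the lag is below `h + q ≤ 2q`.
-/

/-- The piecewise constant deviated argument -/
noncomputable def gammaPCA (h : ℝ) (r : ℝ → ℝ) (t : ℝ) : ℝ :=
  (⌊t / h - (⌊r ((⌊t / h⌋ : ℝ) * h) / h⌋ : ℝ)⌋ : ℝ) * h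

section

variable {h : ℝ} (r : ℝ → ℝ) (t : ℝ)

theorem gammaPCA_eq :
    gammaPCA h r t = ⌊t / h⌋ * h - ⌊r (⌊t / h⌋ * h) / h⌋ * h := by
  rw [gammaPCA, Int.floor_sub_intCast]
  push_cast
  ring

theorem sub_gammaPCA_lt (hh : 0 < h) : t - gammaPCA h r t < h + r (⌊t / h⌋ * h) := by
  have hgrid := Int.sub_floor_div_mul_lt t hh
  have hdelay := Int.sub_floor_div_mul_nonneg (r (⌊t / h⌋ * h)) hh
  rw [gammaPCA_eq]
  linarith

end

theorem gammaPCA_lag_bound_general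
    (q h : ℝ) (hh : 0 < h) (hhq : h ≤ q)
    (r : ℝ → ℝ) (hr : ∀ t, 0 ≤ t → r t ∈ Set.Icc 0 q)
    (wr : ℝ → ℝ) (hwr_nonneg : ∀ ℓ, 0 ≤ wr ℓ) :
    ∀ t, 0 ≤ t → t - gammaPCA h r t ≤ 3 * q + wr q := by
  intro t ht
  have hgrid_nonneg : 0 ≤ (⌊t / h⌋ : ℝ) * h :=
    mul_nonneg (mod_cast Int.floor_nonneg.mpr (div_nonneg ht hh.le)) hh.le
  have hlag := sub_gammaPCA_lt r t hh
  have hrq := (hr _ hgrid_nonneg).2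
  have hwq := hwr_nonneg q
  linarith

/-- t - γ_h(t,r) ≤ 3q + w_r(q) for all t ≥ 0 and h ∈ (0,q]. -/
theorem gammaPCA_lag_bound
    (q h : ℝ) (hq : 0 < q) (hh : 0 < h) (hhq : h ≤ q)
    (r : ℝ → ℝ) (hr : ∀ t, 0 ≤ t → r t ∈ Set.Icc 0 q)
    (wr : ℝ → ℝ) (hwr_nonneg : ∀ ℓ, 0 ≤ wr ℓ) (hwr_mono : Monotone wr)
    (hwr_mod : ∀ ℓ, 0 ≤ ℓ → ∀ t₁ t₂, 0 ≤ t₁ → 0 ≤ t₂ → |t₂ - t₁| ≤ ℓ →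
      |r t₂ - r t₁| ≤ wr ℓ) :
    ∀ t, 0 ≤ t → t - gammaPCA h r t ≤ 3 * q + wr q :=
  gammaPCA_lag_bound_general q h hh hhq r hr wr hwr_nonneg
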